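/- Let (q₁,q₂,q₃,q₄,q₅) = (1,1,1,-1,-3). For every A ∈ SU(5) there exists h ∈ Sp2 such that Σ_{ℓ=1}^5 (|(Ah)_{ℓ2}|² + |(Ah)_{ℓ4}|²) q_ℓ ≤ 0. -/

import Mathlib

open Finset

noncomputable section

/-- SU(5): 5×5 special unitary complex matrices. -/
def SU5 : Set (Matrix (Fin 5) (Fin 5) ℂ) :=
  {A | A * A.conjTranspose = 1 ∧ A.det = 1}

/-- The image of the embedding Sp(2) ↪ SU(5). -/
def Sp2 : Set (Matrix (Fin 5) (Fin 5) ℂ) :=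
  {h | h ∈ SU5 ∧
    (∀ i : Fin 5, h i 4 = if i = 4 then 1 else 0) ∧
    (∀ i : Fin 5, h 4 i = if i = 4 then 1 else 0) ∧
    (∀ i j : Fin 5, i < 2 → j < 2 →
      h (i + 2) (j + 2) = (starRingEnd ℂ) (h i j) ∧
      h (i + 2) j = -(starRingEnd ℂ) (h i (j + 2)))}

/-!
Indices are 0-based, so the relevant columns are 1 and 3 and the negative weights sit in rows
3 and 4. For `M = A * h` unitary, columns 1 and 3 are unit vectors and the weights are
`1 - 2 δ₃ - 4 δ₄`, so the sum is at most `2 - 2 (|M₃₁|² + 2 |M₄₁|²)`; it suffices to make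
`|M₃₁|² + 2 |M₄₁|² ≥ 1`.

Column 1 of `h ∈ Sp2` is `(w, 0)` for an arbitrary unit vector `w ∈ ℂ⁴ = ℍ²`, since `Sp(2)` is
transitive on the unit sphere of `ℍ²`, and then `M_{i1} = ⟪x_i, w⟫` where `x_i` is the conjugate
of row `i` of `A` with its last entry dropped. With `a = |A₃₄|²` and `b = |A₄₄|²`, unitarity of `A`
gives `‖x₃‖² = 1 - a`, `‖x₄‖² = 1 - b` and `|⟪x₃, x₄⟫|² = a b`. If `b ≤ 1/2` take `w` along `x₄`;
otherwise take `w` along `x₃`, and the claim becomes `a (a + 2 b - 1) ≥ 0`.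
-/

open scoped InnerProductSpace ComplexConjugate Matrix

section InnerProductSpace

variable {𝕜 E : Type*} [RCLike 𝕜] [NormedAddCommGroup E] [InnerProductSpace 𝕜 E]

lemma norm_inner_smul_inv_norm (v z : E) :
    ‖⟪v, (‖z‖⁻¹ : 𝕜) • z⟫_𝕜‖ = ‖⟪v, z⟫_𝕜‖ / ‖z‖ := by
  rw [inner_smul_right, norm_mul, norm_inv, RCLike.norm_ofReal, abs_norm, inv_mul_eq_div]

lemma norm_inner_self_smul_inv_norm (z : E) : ‖⟪z, (‖z‖⁻¹ : 𝕜) • z⟫_𝕜‖ = ‖z‖ := by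
  rw [norm_inner_smul_inv_norm, inner_self_eq_norm_sq_to_K, norm_pow, RCLike.norm_ofReal,
    abs_norm, sq, mul_self_div_self]

lemma exists_norm_eq_one_le_norm_inner_sq_add_two_mul (x y : E) (a b : ℝ)
    (hx : ‖x‖ ^ 2 = 1 - a) (hy : ‖y‖ ^ 2 = 1 - b) (hxy : ‖⟪x, y⟫_𝕜‖ ^ 2 = a * b)
    (ha : 0 ≤ a) :
    ∃ w : E, ‖w‖ = 1 ∧ 1 ≤ ‖⟪x, w⟫_𝕜‖ ^ 2 + 2 * ‖⟪y, w⟫_𝕜‖ ^ 2 := by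
  by_cases hb : b ≤ 1 / 2
  · have hy0 : y ≠ 0 := by
      rintro rfl
      norm_num at hy
      linarith
    refine ⟨(‖y‖⁻¹ : 𝕜) • y, norm_smul_inv_norm hy0, ?_⟩
    rw [norm_inner_self_smul_inv_norm]
    nlinarith [sq_nonneg ‖⟪x, (‖y‖⁻¹ : 𝕜) • y⟫_𝕜‖]
  · have hx0 : x ≠ 0 := by
      rintro rfl
      norm_num at hx hxy
      rcases hxy with rfl | rfl <;> linarith
    have hxpos : 0 < 1 - a := by rw [← hx]; positivity
    refine ⟨(‖x‖⁻¹ : 𝕜) • x, norm_smul_inv_norm hx0, ?_⟩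
    rw [norm_inner_self_smul_inv_norm, norm_inner_smul_inv_norm, norm_inner_symm, div_pow, hxy,
      hx, ← sub_nonneg]
    calc 0 ≤ a * (a + 2 * b - 1) / (1 - a) := by
          apply div_nonneg (mul_nonneg ha (by linarith)) hxpos.le
      _ = 1 - a + 2 * (a * b / (1 - a)) - 1 := by
          field_simp
          ring

end InnerProductSpace

section TruncatedRows

variable {𝕜 : Type*} [RCLike 𝕜] {n : ℕ}

lemma sum_norm_sq_apply_eq_one_of_mem_unitaryGroup {ι : Type*} [Fintype ι] [DecidableEq ι]
    {U : Matrix ι ι 𝕜} (hU : U ∈ Matrix.unitaryGroup ι 𝕜) (j : ι) :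
    ∑ i, ‖U i j‖ ^ 2 = 1 := by
  have h := congrFun (congrFun (Matrix.mem_unitaryGroup_iff'.mp hU) j) j
  simp only [Matrix.mul_apply, Matrix.star_apply, RCLike.star_def, RCLike.conj_mul,
    Matrix.one_apply_eq] at h
  exact_mod_cast h

/-- Conjugated so that `⟪truncRow A i, w⟫ = ∑ k, A i k * w k`. -/
def truncRow (A : Matrix (Fin (n + 1)) (Fin (n + 1)) 𝕜) (i : Fin (n + 1)) :
    EuclideanSpace 𝕜 (Fin n) :=
  WithLp.toLp 2 fun k ↦ star (A i k.castSucc)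

lemma inner_truncRow_truncRow {A : Matrix (Fin (n + 1)) (Fin (n + 1)) 𝕜}
    (hA : A ∈ Matrix.unitaryGroup (Fin (n + 1)) 𝕜) (i j : Fin (n + 1)) :
    ⟪truncRow A i, truncRow A j⟫_𝕜 =
      (1 : Matrix (Fin (n + 1)) (Fin (n + 1)) 𝕜) i j - A i (Fin.last n) * star (A j (Fin.last n)) := by
  rw [← Matrix.mem_unitaryGroup_iff.mp hA, Matrix.mul_apply, Fin.sum_univ_castSucc]
  simp [truncRow, PiLp.inner_apply, Matrix.star_apply, mul_comm]

lemma norm_truncRow_sq {A : Matrix (Fin (n + 1)) (Fin (n + 1)) 𝕜}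
    (hA : A ∈ Matrix.unitaryGroup (Fin (n + 1)) 𝕜) (i : Fin (n + 1)) :
    ‖truncRow A i‖ ^ 2 = 1 - ‖A i (Fin.last n)‖ ^ 2 := by
  have h := inner_truncRow_truncRow hA i i
  rw [inner_self_eq_norm_sq_to_K, Matrix.one_apply_eq, RCLike.star_def, RCLike.mul_conj] at h
  exact_mod_cast h

lemma norm_inner_truncRow_truncRow_sq {A : Matrix (Fin (n + 1)) (Fin (n + 1)) 𝕜}
    (hA : A ∈ Matrix.unitaryGroup (Fin (n + 1)) 𝕜) {i j : Fin (n + 1)} (hij : i ≠ j) :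
    ‖⟪truncRow A i, truncRow A j⟫_𝕜‖ ^ 2 = ‖A i (Fin.last n)‖ ^ 2 * ‖A j (Fin.last n)‖ ^ 2 := by
  rw [inner_truncRow_truncRow hA, Matrix.one_apply_ne hij, zero_sub, norm_neg, norm_mul,
    norm_star, mul_pow]

lemma inner_truncRow_eq_mul_apply (A h : Matrix (Fin (n + 1)) (Fin (n + 1)) 𝕜)
    (i c : Fin (n + 1)) (hlast : h (Fin.last n) c = 0) :
    ⟪truncRow A i, WithLp.toLp 2 fun k ↦ h k.castSucc c⟫_𝕜 = (A * h) i c := by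
  simp [truncRow, PiLp.inner_apply, Matrix.mul_apply, Fin.sum_univ_castSucc, hlast, mul_comm]

end TruncatedRows

/-- The quaternionic structure of `ℂ⁴ = ℍ²` preserved by `Sp2`: columns 2 and 3 of an element of
`Sp2` are `quatJ` of columns 0 and 1. -/
def quatJ (w : EuclideanSpace ℂ (Fin 4)) : EuclideanSpace ℂ (Fin 4) :=
  !₂[-conj (w 2), -conj (w 3), conj (w 0), conj (w 1)]

def sp2OfColumns (s w : EuclideanSpace ℂ (Fin 4)) : Matrix (Fin 5) (Fin 5) ℂ :=
  !![s 0, w 0, quatJ s 0, quatJ w 0, 0;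
     s 1, w 1, quatJ s 1, quatJ w 1, 0;
     s 2, w 2, quatJ s 2, quatJ w 2, 0;
     s 3, w 3, quatJ s 3, quatJ w 3, 0;
     0, 0, 0, 0, 1]

lemma det_sp2OfColumns (s w : EuclideanSpace ℂ (Fin 4)) :
    (sp2OfColumns s w).det =
      ⟪s, s⟫_ℂ * ⟪w, w⟫_ℂ - ⟪s, w⟫_ℂ * ⟪w, s⟫_ℂ - ⟪quatJ w, s⟫_ℂ * ⟪s, quatJ w⟫_ℂ := by
  simp only [PiLp.inner_apply, Fin.sum_univ_four, RCLike.inner_apply]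
  simp [sp2OfColumns, quatJ, Matrix.det_succ_column _ 4, Fin.sum_univ_succ, Fin.succAbove]
  ring

lemma conjTranspose_sp2OfColumns_mul_self {s w : EuclideanSpace ℂ (Fin 4)} (hs : ‖s‖ = 1)
    (hw : ‖w‖ = 1) (hsw : ⟪s, w⟫_ℂ = 0) (hjws : ⟪quatJ w, s⟫_ℂ = 0) :
    (sp2OfColumns s w)ᴴ * sp2OfColumns s w = 1 := by
  have hss : ⟪s, s⟫_ℂ = 1 := by simp [inner_self_eq_norm_sq_to_K, hs]
  have hww : ⟪w, w⟫_ℂ = 1 := by simp [inner_self_eq_norm_sq_to_K, hw]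
  have hws : ⟪w, s⟫_ℂ = 0 := by rw [← inner_conj_symm, hsw, map_zero]
  have hsjw : ⟪s, quatJ w⟫_ℂ = 0 := by rw [← inner_conj_symm, hjws, map_zero]
  simp only [PiLp.inner_apply, Fin.sum_univ_four, RCLike.inner_apply, quatJ, Matrix.cons_val,
    map_neg, Complex.conj_conj] at hss hww hsw hws hjws hsjw
  ext i j
  fin_cases i <;> fin_cases j <;>
    simp [Matrix.mul_apply, Fin.sum_univ_five, sp2OfColumns, quatJ] <;>
    first
      | ring1
      | linear_combination hss
      | linear_combination hww
      | linear_combination hsw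
      | linear_combination hws
      | linear_combination hjws
      | linear_combination -hjws
      | linear_combination hsjw
      | linear_combination -hsjw

lemma sp2OfColumns_mem {s w : EuclideanSpace ℂ (Fin 4)} (hs : ‖s‖ = 1) (hw : ‖w‖ = 1)
    (hsw : ⟪s, w⟫_ℂ = 0) (hjws : ⟪quatJ w, s⟫_ℂ = 0) : sp2OfColumns s w ∈ Sp2 := by
  refine ⟨⟨?_, ?_⟩, fun i ↦ ?_, fun i ↦ ?_, fun i j hi hj ↦ ?_⟩
  · exact mul_eq_one_comm.mp (conjTranspose_sp2OfColumns_mul_self hs hw hsw hjws)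
  · rw [det_sp2OfColumns, hsw, hjws]
    simp [inner_self_eq_norm_sq_to_K, hs, hw]
  · fin_cases i <;> simp [sp2OfColumns]
  · fin_cases i <;> simp [sp2OfColumns]
  · fin_cases i <;> fin_cases j <;> simp [sp2OfColumns, quatJ] at hi hj ⊢

lemma exists_ne_zero_inner_eq_zero_inner_quatJ_eq_zero (w : EuclideanSpace ℂ (Fin 4)) :
    ∃ t : EuclideanSpace ℂ (Fin 4), t ≠ 0 ∧ ⟪t, w⟫_ℂ = 0 ∧ ⟪quatJ w, t⟫_ℂ = 0 := by
  by_cases hw : w 0 = 0 ∧ w 2 = 0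
  · refine ⟨EuclideanSpace.single 0 1, by simp, ?_, ?_⟩ <;>
      simp [PiLp.inner_apply, quatJ, hw.1, hw.2]
  refine ⟨!₂[-(w 0 * conj (w 1) + conj (w 2) * w 3), w 0 * conj (w 0) + w 2 * conj (w 2),
    conj (w 0) * w 3 - conj (w 1) * w 2, 0], fun ht ↦ hw ?_, ?_, ?_⟩
  · have h1 := congrArg (· 1) ht
    simp only [Matrix.cons_val, Complex.mul_conj, PiLp.zero_apply] at h1
    norm_cast at h1
    rwa [add_eq_zero_iff_of_nonneg (Complex.normSq_nonneg _) (Complex.normSq_nonneg _),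
      Complex.normSq_eq_zero, Complex.normSq_eq_zero] at h1
  all_goals
    simp only [PiLp.inner_apply, Fin.sum_univ_four, RCLike.inner_apply, quatJ, Matrix.cons_val,
      map_neg, map_add, map_sub, map_mul, map_zero, Complex.conj_conj]
    ring

lemma exists_mem_Sp2_col_one {w : EuclideanSpace ℂ (Fin 4)} (hw : ‖w‖ = 1) :
    ∃ h ∈ Sp2, (WithLp.toLp 2 fun k ↦ h k.castSucc 1) = w ∧ h (Fin.last 4) 1 = 0 := by
  obtain ⟨t, ht, htw, hjwt⟩ := exists_ne_zero_inner_eq_zero_inner_quatJ_eq_zero w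
  refine ⟨sp2OfColumns ((‖t‖⁻¹ : ℂ) • t) w, sp2OfColumns_mem (norm_smul_inv_norm ht) hw
    (by rw [inner_smul_left, htw, mul_zero]) (by rw [inner_smul_right, hjwt, mul_zero]), ?_, rfl⟩
  ext k
  fin_cases k <;> rfl

lemma weighted_sum_cols_one_three_nonpos {M : Matrix (Fin 5) (Fin 5) ℂ}
    (hM : M ∈ Matrix.unitaryGroup (Fin 5) ℂ) (h : 1 ≤ ‖M 3 1‖ ^ 2 + 2 * ‖M 4 1‖ ^ 2) :
    ∑ ℓ : Fin 5, (‖M ℓ 1‖ ^ 2 + ‖M ℓ 3‖ ^ 2) *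
        (((![1, 1, 1, -1, -3] : Fin 5 → ℤ) ℓ : ℤ) : ℝ) ≤ 0 := by
  have h1 := sum_norm_sq_apply_eq_one_of_mem_unitaryGroup hM 1
  have h3 := sum_norm_sq_apply_eq_one_of_mem_unitaryGroup hM 3
  simp only [Fin.sum_univ_five] at h1 h3 ⊢
  simp only [Matrix.cons_val, Fin.isValue, Int.reduceNeg, Int.cast_neg, Int.cast_one,
    Int.cast_ofNat]
  linarith [sq_nonneg ‖M 3 3‖, sq_nonneg ‖M 4 3‖]

theorem stmt6 (A : Matrix (Fin 5) (Fin 5) ℂ) (hA : A ∈ SU5) :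
    ∃ h ∈ Sp2,
      ∑ ℓ : Fin 5, (‖(A * h) ℓ 1‖ ^ 2 + ‖(A * h) ℓ 3‖ ^ 2) *
        (((![1, 1, 1, -1, -3] : Fin 5 → ℤ) ℓ : ℤ) : ℝ) ≤ 0 := by
  have hAU : A ∈ Matrix.unitaryGroup (Fin 5) ℂ := Matrix.mem_unitaryGroup_iff.mpr hA.1
  obtain ⟨w, hw, hle⟩ := exists_norm_eq_one_le_norm_inner_sq_add_two_mul
    (truncRow A 3) (truncRow A 4) _ _ (norm_truncRow_sq hAU 3) (norm_truncRow_sq hAU 4)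
    (norm_inner_truncRow_truncRow_sq hAU (by decide)) (sq_nonneg _)
  obtain ⟨h, hSp, hcol, hlast⟩ := exists_mem_Sp2_col_one hw
  have hhU : h ∈ Matrix.unitaryGroup (Fin 5) ℂ := Matrix.mem_unitaryGroup_iff.mpr hSp.1.1
  refine ⟨h, hSp, weighted_sum_cols_one_three_nonpos (Submonoid.mul_mem _ hAU hhU) ?_⟩
  rwa [← inner_truncRow_eq_mul_apply A h 3 1 hlast, ← inner_truncRow_eq_mul_apply A h 4 1 hlast,
    hcol]
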